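/- arXiv:1805.02125 — 2 statements merged into one kernel-verified Lean document; each statement's English description precedes it below -/
import Mathlib

section
/- Let K ≥ 2 be an integer, θ_k = 2πk/K for k = 0,…,K−1, and let x̃_k = x_c + (R + f_k)cos θ_k, ỹ_k = y_c + (R + f_k)sin θ_k. For every fixed r ∈ ℝ and every (a, b) ∈ ℝ², the circle-fitting energy C satisfies C(x̃_c, ỹ_c, r) ≤ C(a, b, r), where (x̃_c, ỹ_c) = (x_c + (1/K)∑_{k=0}^{K−1} f_k cos θ_k, y_c + (1/K)∑_{k=0}^{K−1} f_k sin θ_k); i.e., for each fixed radius, the shifted-average center minimizes the circle-fitting energy over all centers. -/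
open Real Finset

/-!
For a fixed radius the energy splits into a sum of squares in `a` and one in `b`, each
minimized at the mean of its data. Since the sample angles are the arguments of the `K`-th
roots of unity, `∑ cos θ_k = ∑ sin θ_k = 0`, so the radial terms `(R - r) cos θ_k`,
`(R - r) sin θ_k` average out and the means are exactly the shifted-average center.
-/

lemma sum_exp_two_pi_mul_div_mul_I_eq_zero {K : ℕ} (hK : 2 ≤ K) :
    ∑ k ∈ range K, Complex.exp (↑(2 * π * k / K) * Complex.I) = 0 := by
  have hζ := Complex.isPrimitiveRoot_exp K (by omega)
  rw [← hζ.geom_sum_eq_zero (by omega)]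
  refine sum_congr rfl fun k _ => ?_
  rw [← Complex.exp_nat_mul]
  push_cast
  ring_nf

lemma sum_cos_two_pi_mul_div_eq_zero {K : ℕ} (hK : 2 ≤ K) :
    ∑ k ∈ range K, cos (2 * π * k / K) = 0 := by
  simpa only [Complex.re_sum, Complex.exp_ofReal_mul_I_re, Complex.zero_re] using
    congrArg Complex.re (sum_exp_two_pi_mul_div_mul_I_eq_zero hK)

lemma sum_sin_two_pi_mul_div_eq_zero {K : ℕ} (hK : 2 ≤ K) :
    ∑ k ∈ range K, sin (2 * π * k / K) = 0 := by
  simpa only [Complex.im_sum, Complex.exp_ofReal_mul_I_im, Complex.zero_im] using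
    congrArg Complex.im (sum_exp_two_pi_mul_div_mul_I_eq_zero hK)

lemma sum_sq_sub_eq_sum_sq_sub_add {ι : Type*} (s : Finset ι) (g : ι → ℝ) {m : ℝ}
    (hm : ∑ i ∈ s, g i = #s * m) (a : ℝ) :
    ∑ i ∈ s, (g i - a) ^ 2 = ∑ i ∈ s, (g i - m) ^ 2 + #s * (m - a) ^ 2 := by
  have hexpand : ∀ i, (g i - a) ^ 2 = (g i - m) ^ 2 + 2 * (m - a) * g i - (m - a) * (m + a) :=
    fun i => by ring
  simp only [hexpand, sum_sub_distrib, sum_add_distrib, ← mul_sum, hm, sum_const, nsmul_eq_mul]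
  ring

lemma sum_sq_sub_le_of_sum_eq_card_mul {ι : Type*} (s : Finset ι) (g : ι → ℝ) {m : ℝ}
    (hm : ∑ i ∈ s, g i = #s * m) (a : ℝ) :
    ∑ i ∈ s, (g i - m) ^ 2 ≤ ∑ i ∈ s, (g i - a) ^ 2 := by
  rw [sum_sq_sub_eq_sum_sq_sub_add s g hm a]
  exact le_add_of_nonneg_right (by positivity)

lemma sum_contour_sub_eq_card_mul_shifted_center {K : ℕ} (hK : (K : ℝ) ≠ 0)
    (c R r : ℝ) (f w : ℕ → ℝ) (hw : ∑ k ∈ range K, w k = 0) :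
    ∑ k ∈ range K, (c + (R + f k) * w k - r * w k) =
      #(range K) * (c + 1 / (K : ℝ) * ∑ k ∈ range K, f k * w k) := by
  have hpt : ∀ k, c + (R + f k) * w k - r * w k = c + (R - r) * w k + f k * w k :=
    fun k => by ring
  simp only [hpt, sum_add_distrib, ← mul_sum, hw, sum_const, card_range, nsmul_eq_mul]
  field_simp
  ring

/-- For each fixed radius, the shifted-average center minimizes the
circle-fitting energy over all centers. -/
theorem center_minimizes_energy
    (K : ℕ) (hK : 2 ≤ K) (xc yc R : ℝ) (f : ℕ → ℝ)
    (θ : ℕ → ℝ) (hθ : ∀ k, θ k = 2 * Real.pi * k / K)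
    (xt yt : ℕ → ℝ)
    (hxt : ∀ k, xt k = xc + (R + f k) * Real.cos (θ k))
    (hyt : ∀ k, yt k = yc + (R + f k) * Real.sin (θ k))
    (C : ℝ → ℝ → ℝ → ℝ)
    (hC : ∀ a b r, C a b r =
      ∑ k ∈ Finset.range K,
        ((xt k - a - r * Real.cos (θ k)) ^ 2 + (yt k - b - r * Real.sin (θ k)) ^ 2))
    (xtc ytc : ℝ)
    (hxtc : xtc = xc + (1 / (K : ℝ)) * ∑ k ∈ Finset.range K, f k * Real.cos (θ k))
    (hytc : ytc = yc + (1 / (K : ℝ)) * ∑ k ∈ Finset.range K, f k * Real.sin (θ k)) :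
    ∀ r : ℝ, ∀ a b : ℝ, C xtc ytc r ≤ C a b r := by
  intro r a b
  have hK0 : (K : ℝ) ≠ 0 := by positivity
  have hcos : ∑ k ∈ range K, cos (θ k) = 0 := by
    simpa only [hθ] using sum_cos_two_pi_mul_div_eq_zero hK
  have hsin : ∑ k ∈ range K, sin (θ k) = 0 := by
    simpa only [hθ] using sum_sin_two_pi_mul_div_eq_zero hK
  have hx : ∑ k ∈ range K, (xt k - r * cos (θ k)) = #(range K) * xtc := by
    simpa only [hxt, hxtc] using sum_contour_sub_eq_card_mul_shifted_center hK0 xc R r f _ hcos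
  have hy : ∑ k ∈ range K, (yt k - r * sin (θ k)) = #(range K) * ytc := by
    simpa only [hyt, hytc] using sum_contour_sub_eq_card_mul_shifted_center hK0 yc R r f _ hsin
  simp only [hC, sub_right_comm _ _ (r * _), sum_add_distrib]
  exact add_le_add (sum_sq_sub_le_of_sum_eq_card_mul _ _ hx a)
    (sum_sq_sub_le_of_sum_eq_card_mul _ _ hy b)
end

section
/- Let K ≥ 3 be an integer, θ_k = 2πk/K for k = 0,…,K−1, and let x̃_k = x_c + (R + f_k)cos θ_k, ỹ_k = y_c + (R + f_k)sin θ_k. If (a, b, r) ∈ ℝ³ is any global minimizer of the circle-fitting energy C, then necessarily a = x_c + (1/K)∑_{k=0}^{K−1} f_k cos θ_k, b = y_c + (1/K)∑_{k=0}^{K−1} f_k sin θ_k, and r = R + (1/K)∑_{k=0}^{K−1} f_k; i.e., for K ≥ 3 the minimizing circle is unique. -/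
open Real Finset

theorem sum_exp_unity (K : ℕ) (hK : 2 ≤ K) :
    ∑ k ∈ Finset.range K, Complex.exp ((2 * Real.pi * k / K : ℝ) * Complex.I) = 0 := by
  have hKpos : (0:ℝ) < K := by
    have : 0 < K := by omega
    exact_mod_cast this
  have hK2 : (2:ℝ) ≤ K := by exact_mod_cast hK
  set z : ℂ := Complex.exp ((2 * Real.pi / K : ℝ) * Complex.I) with hz
  have hz_pow : ∀ k : ℕ, z ^ k = Complex.exp ((2 * Real.pi * k / K : ℝ) * Complex.I) := by
    intro k
    rw [hz, ← Complex.exp_nat_mul]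
    congr 1
    push_cast
    ring
  have hzK : z ^ K = 1 := by
    rw [hz_pow]
    have h1 : (2 * Real.pi * K / K : ℝ) = 2 * Real.pi := by
      field_simp
    rw [h1]
    have := Complex.exp_two_pi_mul_I
    rw [← this]
    congr 1
    push_cast
    ring
  have hz1 : z ≠ 1 := by
    intro h
    rw [hz, Complex.exp_eq_one_iff] at h
    obtain ⟨n, hn⟩ := h
    have him := congrArg Complex.im hn
    simp [Complex.mul_im, Complex.ofReal_im, Complex.ofReal_re] at him
    -- him : 2 * π / K = n * (2 * π)
    have hpi := Real.pi_pos
    have hL : 0 < (n:ℝ) * (2 * Real.pi) := by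
      rw [← him]; positivity
    have hn0 : (0:ℝ) < n := by nlinarith [hL, hpi]
    have h2 : 2 * Real.pi / K ≤ Real.pi := by
      rw [div_le_iff₀ hKpos]
      nlinarith [hpi, hK2]
    have hn1 : (n:ℝ) < 1 := by nlinarith [him, h2, hpi]
    have h0 : 0 < n := by exact_mod_cast hn0
    have h1 : n < 1 := by exact_mod_cast hn1
    omega
  have := geom_sum_eq hz1 K
  calc ∑ k ∈ Finset.range K, Complex.exp ((2 * Real.pi * k / K : ℝ) * Complex.I)
      = ∑ k ∈ Finset.range K, z ^ k := by
        refine Finset.sum_congr rfl fun k _ => (hz_pow k).symm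
    _ = (z ^ K - 1) / (z - 1) := this
    _ = 0 := by rw [hzK]; simp

theorem sum_cos_unity (K : ℕ) (hK : 2 ≤ K) :
    ∑ k ∈ Finset.range K, Real.cos (2 * Real.pi * k / K) = 0 := by
  have h := sum_exp_unity K hK
  have h2 : ∑ k ∈ Finset.range K, Real.cos (2 * Real.pi * k / K)
      = (∑ k ∈ Finset.range K, Complex.exp ((2 * Real.pi * k / K : ℝ) * Complex.I)).re := by
    rw [Complex.re_sum]
    exact Finset.sum_congr rfl fun k _ => (Complex.exp_ofReal_mul_I_re _).symm
  rw [h2, h]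
  rfl

theorem sum_sin_unity (K : ℕ) (hK : 2 ≤ K) :
    ∑ k ∈ Finset.range K, Real.sin (2 * Real.pi * k / K) = 0 := by
  have h := sum_exp_unity K hK
  have h2 : ∑ k ∈ Finset.range K, Real.sin (2 * Real.pi * k / K)
      = (∑ k ∈ Finset.range K, Complex.exp ((2 * Real.pi * k / K : ℝ) * Complex.I)).im := by
    rw [Complex.im_sum]
    exact Finset.sum_congr rfl fun k _ => (Complex.exp_ofReal_mul_I_im _).symm
  rw [h2, h]
  rfl

/-- For `K ≥ 3` any global minimizer of the circle-fitting energy equals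
the shifted-average center with the average-force-updated radius. -/
theorem minimizer_unique
    (K : ℕ) (hK : 3 ≤ K) (xc yc R : ℝ) (f : ℕ → ℝ)
    (θ : ℕ → ℝ) (hθ : ∀ k, θ k = 2 * Real.pi * k / K)
    (xt yt : ℕ → ℝ)
    (hxt : ∀ k, xt k = xc + (R + f k) * Real.cos (θ k))
    (hyt : ∀ k, yt k = yc + (R + f k) * Real.sin (θ k))
    (C : ℝ → ℝ → ℝ → ℝ)
    (hC : ∀ a b r, C a b r =
      ∑ k ∈ Finset.range K,
        ((xt k - a - r * Real.cos (θ k)) ^ 2 + (yt k - b - r * Real.sin (θ k)) ^ 2))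
    (a b r : ℝ)
    (hmin : ∀ a' b' r' : ℝ, C a b r ≤ C a' b' r') :
    a = xc + (1 / (K : ℝ)) * ∑ k ∈ Finset.range K, f k * Real.cos (θ k) ∧
    b = yc + (1 / (K : ℝ)) * ∑ k ∈ Finset.range K, f k * Real.sin (θ k) ∧
    r = R + (1 / (K : ℝ)) * ∑ k ∈ Finset.range K, f k := by
  have hKpos : (0:ℝ) < K := by
    have : 0 < K := by omega
    exact_mod_cast this
  have hKne : (K:ℝ) ≠ 0 := ne_of_gt hKpos
  have hcos : ∑ k ∈ Finset.range K, Real.cos (θ k) = 0 := by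
    have := sum_cos_unity K (by omega)
    calc ∑ k ∈ Finset.range K, Real.cos (θ k)
        = ∑ k ∈ Finset.range K, Real.cos (2 * Real.pi * k / K) := by
          exact Finset.sum_congr rfl fun k _ => by rw [hθ]
      _ = 0 := this
  have hsin : ∑ k ∈ Finset.range K, Real.sin (θ k) = 0 := by
    have := sum_sin_unity K (by omega)
    calc ∑ k ∈ Finset.range K, Real.sin (θ k)
        = ∑ k ∈ Finset.range K, Real.sin (2 * Real.pi * k / K) := by
          exact Finset.sum_congr rfl fun k _ => by rw [hθ]
      _ = 0 := this
  -- closed form for C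
  have hform : ∀ a' b' r' : ℝ, C a' b' r' =
      (K:ℝ) * (xc - a')^2 + (K:ℝ) * (yc - b')^2 + (K:ℝ) * (R - r')^2
      + (2 * (R - r')) * (∑ k ∈ Finset.range K, f k)
      + (∑ k ∈ Finset.range K, (f k)^2)
      + (2 * (xc - a')) * (∑ k ∈ Finset.range K, f k * Real.cos (θ k))
      + (2 * (yc - b')) * (∑ k ∈ Finset.range K, f k * Real.sin (θ k)) := by
    intro a' b' r'
    rw [hC]
    have hterm : ∀ k, (xt k - a' - r' * Real.cos (θ k)) ^ 2 + (yt k - b' - r' * Real.sin (θ k)) ^ 2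
        = ((xc - a')^2 + (yc - b')^2 + (R - r')^2)
          + (2 * (R - r')) * f k + (f k)^2
          + (2 * (xc - a') * (R - r')) * Real.cos (θ k)
          + (2 * (xc - a')) * (f k * Real.cos (θ k))
          + (2 * (yc - b') * (R - r')) * Real.sin (θ k)
          + (2 * (yc - b')) * (f k * Real.sin (θ k)) := by
      intro k
      rw [hxt, hyt]
      linear_combination (R + f k - r')^2 * (Real.sin_sq_add_cos_sq (θ k))
    rw [Finset.sum_congr rfl fun k _ => hterm k]
    simp only [Finset.sum_add_distrib, ← Finset.mul_sum, Finset.sum_const,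
      Finset.card_range, nsmul_eq_mul]
    rw [hcos, hsin]
    ring
  -- compare with the candidate minimizer
  have h := hmin (xc + (1 / (K:ℝ)) * ∑ k ∈ Finset.range K, f k * Real.cos (θ k))
                 (yc + (1 / (K:ℝ)) * ∑ k ∈ Finset.range K, f k * Real.sin (θ k))
                 (R + (1 / (K:ℝ)) * ∑ k ∈ Finset.range K, f k)
  rw [hform a b r, hform _ _ _] at h
  set S1 := ∑ k ∈ Finset.range K, f k * Real.cos (θ k) with hS1
  set S2 := ∑ k ∈ Finset.range K, f k * Real.sin (θ k) with hS2
  set S3 := ∑ k ∈ Finset.range K, f k with hS3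
  set Q := ∑ k ∈ Finset.range K, (f k)^2 with hQ
  have key : ((K:ℝ) * (xc - a) + S1)^2 + ((K:ℝ) * (yc - b) + S2)^2
      + ((K:ℝ) * (R - r) + S3)^2 ≤ 0 := by
    have eq1 : (K:ℝ) * (((K:ℝ)*(xc-a)^2 + (K:ℝ)*(yc-b)^2 + (K:ℝ)*(R-r)^2
          + 2*(R-r)*S3 + Q + 2*(xc-a)*S1 + 2*(yc-b)*S2)
        - ((K:ℝ)*(xc - (xc + (1 / (K:ℝ)) * S1))^2 + (K:ℝ)*(yc - (yc + (1 / (K:ℝ)) * S2))^2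
          + (K:ℝ)*(R - (R + (1 / (K:ℝ)) * S3))^2
          + 2*(R - (R + (1 / (K:ℝ)) * S3))*S3 + Q
          + 2*(xc - (xc + (1 / (K:ℝ)) * S1))*S1 + 2*(yc - (yc + (1 / (K:ℝ)) * S2))*S2))
        = ((K:ℝ) * (xc - a) + S1)^2 + ((K:ℝ) * (yc - b) + S2)^2
          + ((K:ℝ) * (R - r) + S3)^2 := by
      field_simp
      ring
    rw [← eq1]
    have hD : (0:ℝ) ≤ (K:ℝ) := hKpos.le
    have hsub : (((K:ℝ)*(xc-a)^2 + (K:ℝ)*(yc-b)^2 + (K:ℝ)*(R-r)^2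
          + 2*(R-r)*S3 + Q + 2*(xc-a)*S1 + 2*(yc-b)*S2)
        - ((K:ℝ)*(xc - (xc + (1 / (K:ℝ)) * S1))^2 + (K:ℝ)*(yc - (yc + (1 / (K:ℝ)) * S2))^2
          + (K:ℝ)*(R - (R + (1 / (K:ℝ)) * S3))^2
          + 2*(R - (R + (1 / (K:ℝ)) * S3))*S3 + Q
          + 2*(xc - (xc + (1 / (K:ℝ)) * S1))*S1 + 2*(yc - (yc + (1 / (K:ℝ)) * S2))*S2)) ≤ 0 := by
      linarith
    exact mul_nonpos_of_nonneg_of_nonpos hD hsub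
  have s1 := sq_nonneg ((K:ℝ) * (xc - a) + S1)
  have s2 := sq_nonneg ((K:ℝ) * (yc - b) + S2)
  have s3 := sq_nonneg ((K:ℝ) * (R - r) + S3)
  have k1 : (K:ℝ) * (xc - a) + S1 = 0 :=
    sq_eq_zero_iff.mp (le_antisymm (by linarith) s1)
  have k2 : (K:ℝ) * (yc - b) + S2 = 0 :=
    sq_eq_zero_iff.mp (le_antisymm (by linarith) s2)
  have k3 : (K:ℝ) * (R - r) + S3 = 0 :=
    sq_eq_zero_iff.mp (le_antisymm (by linarith) s3)
  refine ⟨?_, ?_, ?_⟩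
  · field_simp
    linarith [k1]
  · field_simp
    linarith [k2]
  · field_simp
    linarith [k3]
end
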